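/- Every factor-critical component Z of size ≥ 3 in a graph with maximum matching M missing exactly one node r of Z admits an odd M-alternating cycle through r: there exist nodes v_1,...,v_k in Z with r - v_1 - M(v_1) - ... - v_k - M(v_k) - r an M-alternating cycle whose two edges at r are non-matching edges. -/

import Mathlib

open Finset
open scoped Classical

noncomputable section

/-- A (partial) matching on a graph, given as a symmetric partner function. -/
def IsMatchingOn {W : Type*} (H : SimpleGraph W) (f : W → Option W) : Prop :=
  (∀ v w, f v = some w → f w = some v) ∧ (∀ v w, f v = some w → H.Adj v w)

/-- Number of matched vertices of a partner function. -/
def msize {W : Type*} [Fintype W] (f : W → Option W) : ℕ :=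
  (Finset.univ.filter (fun x => f x ≠ none)).card

/-- f is a maximum-size matching on H. -/
def MaxMatchingOn {W : Type*} [Fintype W] (H : SimpleGraph W) (f : W → Option W) : Prop :=
  IsMatchingOn H f ∧ ∀ g, IsMatchingOn H g → msize g ≤ msize f

variable {V : Type*} [Fintype V] [DecidableEq V]

/-- Rank of a situation (partner or unmatched); smaller is better, being
unmatched is worst (any neighbor is preferred to being unmatched). -/
def rkv (rank : V → V → ℕ) (v : V) : Option V → WithTop ℕ
  | none => ⊤
  | some w => (rank v w : WithTop ℕ)

/-- vote of v comparing situation s to situation t: +1 if v prefers s, -1 if v prefers t. -/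
def vote (rank : V → V → ℕ) (v : V) (s t : Option V) : ℤ :=
  if rkv rank v s < rkv rank v t then 1 else if rkv rank v t < rkv rank v s then -1 else 0

variable (G : SimpleGraph V) (rank : V → V → ℕ)

/-- The preferences are strict (a linear order) on the neighbors of each node. -/
def StrictPrefs : Prop := ∀ u v w, G.Adj u v → G.Adj u w → rank u v = rank u w → v = w

/-- g is more popular than f : strictly more nodes prefer g than prefer f. -/
def MorePopular (g f : V → Option V) : Prop :=
  (Finset.univ.filter (fun v => rkv rank v (g v) < rkv rank v (f v))).card >
  (Finset.univ.filter (fun v => rkv rank v (f v) < rkv rank v (g v))).card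

/-- f is popular: no matching is more popular than f. -/
def PopularM (f : V → Option V) : Prop :=
  ∀ g, IsMatchingOn G g → ¬ MorePopular rank g f

/-- uv is a blocking edge for matching f. -/
def BlockingEdge (f : V → Option V) (u v : V) : Prop :=
  G.Adj u v ∧ f u ≠ some v ∧
    rkv rank u (some v) < rkv rank u (f u) ∧ rkv rank v (some u) < rkv rank v (f v)

/-- Vote based weight of an edge uv. -/
def wE (f : V → Option V) (u v : V) : ℤ :=
  vote rank u (some v) (f u) + vote rank v (some u) (f v)

/-- Vote based weight of the loop at u. -/
def wL (f : V → Option V) (u : V) : ℤ := if f u = none then 0 else -1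

/-- G_M : G minus the edges of weight -2. -/
def GMgraph (f : V → Option V) : SimpleGraph V where
  Adj u v := G.Adj u v ∧ wE rank f u v ≠ -2
  symm := ⟨by
    intro u v h
    refine ⟨h.1.symm, ?_⟩
    have h2 := h.2
    simp only [wE] at h2 ⊢
    omega⟩
  loopless := ⟨fun v h => G.loopless.irrefl v h.1⟩

/-- An M-alternating path p 0, p 1, ..., p n (n edges) in graph H with matching f. -/
def AltPath {W : Type*} (H : SimpleGraph W) (f : W → Option W) (p : ℕ → W) (n : ℕ) : Prop :=
  (∀ i j, i ≤ n → j ≤ n → p i = p j → i = j) ∧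
  (∀ i, i < n → H.Adj (p i) (p (i + 1))) ∧
  (∀ i, i + 1 < n → (f (p i) = some (p (i + 1)) ↔ ¬ f (p (i + 1)) = some (p (i + 2))))

/-- An M-alternating cycle p 0, ..., p n = p 0 (n edges, n even), with
matching edges at odd positions. -/
def AltCycle {W : Type*} (H : SimpleGraph W) (f : W → Option W) (p : ℕ → W) (n : ℕ) : Prop :=
  4 ≤ n ∧ Even n ∧ p n = p 0 ∧ (∀ i j, i < n → j < n → p i = p j → i = j) ∧
  (∀ i, i < n → H.Adj (p i) (p (i + 1))) ∧
  (∀ i, i < n → (f (p i) = some (p (i + 1)) ↔ Odd i))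

/-- Blocking structure (i): an alternating cycle in G_M with a blocking edge. -/
def StructI (f : V → Option V) : Prop :=
  ∃ (p : ℕ → V) (n : ℕ), AltCycle (GMgraph G rank f) f p n ∧
    ∃ i, i < n ∧ BlockingEdge G rank f (p i) (p (i + 1))

/-- Blocking structure (ii): an alternating path in G_M whose first and last
edges are two disjoint blocking edges. -/
def StructII (f : V → Option V) : Prop :=
  ∃ (p : ℕ → V) (n : ℕ), 3 ≤ n ∧ AltPath (GMgraph G rank f) f p n ∧
    BlockingEdge G rank f (p 0) (p 1) ∧ BlockingEdge G rank f (p (n - 1)) (p n)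

/-- Blocking structure (iii): an alternating path in G_M from an unmatched node
ending in a blocking edge. -/
def StructIII (f : V → Option V) : Prop :=
  ∃ (p : ℕ → V) (n : ℕ), 1 ≤ n ∧ AltPath (GMgraph G rank f) f p n ∧ f (p 0) = none ∧
    BlockingEdge G rank f (p (n - 1)) (p n)

/-- Vertex set of the auxiliary graph G_M^* : original nodes, blocking nodes b_v,
star nodes b_S (indexed by the middle node of the star), and the contracted node u. -/
abbrev Vstar (V : Type*) := V ⊕ V ⊕ V ⊕ Unit

def origV : V → Vstar V := Sum.inl
def bNodeV : V → Vstar V := fun v => Sum.inr (Sum.inl v)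
def sNodeV : V → Vstar V := fun v => Sum.inr (Sum.inr (Sum.inl v))
def uNode : Vstar V := Sum.inr (Sum.inr (Sum.inr ()))

/-- v is an endpoint of some blocking edge. -/
def IsBlockEnd (f : V → Option V) (v : V) : Prop := ∃ w, BlockingEdge G rank f v w

/-- v is a leaf node: incident to exactly one blocking edge. -/
def IsLeafNode (f : V → Option V) (v : V) : Prop := ∃! w, BlockingEdge G rank f v w

/-- v is a leaf of a star: a leaf node whose unique blocking neighbor z also has
another leaf node attached by a blocking edge. -/
def IsStarLeaf (f : V → Option V) (v : V) : Prop :=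
  IsLeafNode G rank f v ∧ ∃ z, BlockingEdge G rank f v z ∧
    ∃ v', v' ≠ v ∧ IsLeafNode G rank f v' ∧ BlockingEdge G rank f v' z

/-- The (unique) blocking neighbor of a leaf node. -/
def midOf (f : V → Option V) (v : V) : V :=
  if h : ∃ z, BlockingEdge G rank f v z then h.choose else v

/-- b(v): the auxiliary unmatched node attached to the blocking-edge endpoint v. -/
def bmap (f : V → Option V) (v : V) : Vstar V :=
  if IsStarLeaf G rank f v then sNodeV (midOf G rank f v) else bNodeV v

/-- Projection of an original node into G_M^*: unmatched nodes are contracted to u. -/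
def projV (f : V → Option V) (v : V) : Vstar V :=
  if f v = none then uNode else origV v

/-- Underlying (asymmetric) edge description of G_M^*. -/
def starRel (f : V → Option V) (x y : Vstar V) : Prop :=
  (∃ v w, (GMgraph G rank f).Adj v w ∧ ¬ BlockingEdge G rank f v w ∧
    x = projV f v ∧ y = projV f w) ∨
  (∃ v, IsBlockEnd G rank f v ∧ x = projV f v ∧ y = bmap G rank f v)

/-- The auxiliary graph G_M^*. -/
def GMstar (f : V → Option V) : SimpleGraph (Vstar V) where
  Adj x y := x ≠ y ∧ (starRel G rank f x y ∨ starRel G rank f y x)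
  symm := ⟨fun x y h => ⟨h.1.symm, h.2.symm⟩⟩
  loopless := ⟨fun x h => h.1 rfl⟩

/-- The matching M viewed in G_M^*. -/
def fstar (f : V → Option V) : Vstar V → Option (Vstar V)
  | Sum.inl v => (f v).map Sum.inl
  | _ => none

/-- The dual objective of LP2. -/
def dualObj (α : V → ℝ) (y : Finset V → ℝ) : ℝ :=
  (∑ v, α v) +
    ∑ Z ∈ Finset.univ.filter (fun Z : Finset V => Odd Z.card), ((Z.card - 1 : ℝ) / 2) * y Z

/-- Feasibility for LP2, the dual of the fractional matching LP with odd set constraints. -/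
def DualFeasible (f : V → Option V) (α : V → ℝ) (y : Finset V → ℝ) : Prop :=
  (∀ v w, G.Adj v w →
    (wE rank f v w : ℝ) ≤ α v + α w +
      ∑ Z ∈ Finset.univ.filter (fun Z : Finset V => Odd Z.card ∧ v ∈ Z ∧ w ∈ Z), y Z) ∧
  (∀ v, (wL f v : ℝ) ≤ α v) ∧ (∀ Z, 0 ≤ y Z)

/-- A feasible solution of LP1: a fractional matching of G~ (loops allowed)
satisfying the odd-set constraints.  `x v v` is the value of the loop at v. -/
def PrimalFeasible (x : V → V → ℝ) : Prop :=
  (∀ v w, x v w = x w v) ∧ (∀ v w, 0 ≤ x v w) ∧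
  (∀ v w, v ≠ w → ¬ G.Adj v w → x v w = 0) ∧
  (∀ v, ∑ w, x v w = 1) ∧
  (∀ Z : Finset V, Odd Z.card →
    (∑ v ∈ Z, ∑ w ∈ Z, if v ≠ w then x v w else 0) ≤ (Z.card - 1 : ℝ))

/-- The w_M-value of a fractional matching x of G~. -/
def primalVal (f : V → Option V) (x : V → V → ℝ) : ℝ :=
  (∑ v, ∑ w, if v ≠ w then (wE rank f v w : ℝ) * x v w else 0) / 2 +
    ∑ v, (wL f v : ℝ) * x v v

/-- A fractional matching of G~ (no odd-set constraints). -/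
def FracMatching (x : V → V → ℝ) : Prop :=
  (∀ v w, x v w = x w v) ∧ (∀ v w, 0 ≤ x v w) ∧
  (∀ v w, v ≠ w → ¬ G.Adj v w → x v w = 0) ∧ (∀ v, ∑ w, x v w = 1)

/-- f is fractional popular ("truly popular"): no fractional matching has positive w_M-value. -/
def FracPopular (f : V → Option V) : Prop :=
  ∀ x, FracMatching G x → primalVal rank f x ≤ 0

/-- x is missed by some maximum matching of H (x is in the Gallai-Edmonds set D). -/
def Exposable {W : Type*} [Fintype W] (H : SimpleGraph W) (x : W) : Prop :=
  ∃ g, MaxMatchingOn H g ∧ g x = none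

/-- Reachability inside the set P by a walk of H. -/
def ReachWithin {W : Type*} (H : SimpleGraph W) (P : W → Prop) (x y : W) : Prop :=
  ∃ (p : ℕ → W) (n : ℕ), p 0 = x ∧ p n = y ∧ (∀ i, i ≤ n → P (p i)) ∧ ∀ i, i < n → H.Adj (p i) (p (i + 1))

/-- X: nodes of G_M^* reachable from blocking or star nodes on an alternating path. -/
def ReachX (f : V → Option V) (x : Vstar V) : Prop :=
  ∃ (p : ℕ → Vstar V) (n : ℕ), AltPath (GMstar G rank f) (fstar f) p n ∧
    (∃ v, IsBlockEnd G rank f v ∧ p 0 = bmap G rank f v) ∧ p n = x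

/-- K is a connected component of G_M^*[X ∩ D]. -/
def IsCompXD (f : V → Option V) (K : Finset (Vstar V)) : Prop :=
  K.Nonempty ∧
  (∀ x ∈ K, ReachX G rank f x ∧ Exposable (GMstar G rank f) x) ∧
  (∀ x ∈ K, ∀ y, ReachX G rank f y → Exposable (GMstar G rank f) y →
    (GMstar G rank f).Adj x y → y ∈ K) ∧
  (∀ x ∈ K, ∀ y ∈ K,
    ReachWithin (GMstar G rank f) (fun z => ReachX G rank f z ∧ Exposable (GMstar G rank f) z) x y)

/-- The α of the dual witness constructed from the Gallai-Edmonds decomposition of G_M^*. -/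
def alphaGE (f : V → Option V) (v : V) : ℝ :=
  if ReachX G rank f (origV v) ∧ Exposable (GMstar G rank f) (origV v) then -1
  else if ReachX G rank f (origV v) ∧ ¬ Exposable (GMstar G rank f) (origV v) ∧
      (∃ y, Exposable (GMstar G rank f) y ∧ (GMstar G rank f).Adj (origV v) y) then 1
  else 0

/-- The odd set of original nodes arising from a component K of G_M^*[X∩D]:
original members of K, with a star-node root replaced by the middle node of its star. -/
def ZofK (K : Finset (Vstar V)) : Finset V :=
  Finset.univ.filter (fun v => origV v ∈ K ∨ sNodeV v ∈ K)

/-- The y of the dual witness constructed from the Gallai-Edmonds decomposition. -/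
def yGE (f : V → Option V) (Z : Finset V) : ℝ :=
  if ∃ K, IsCompXD G rank f K ∧ 3 ≤ K.card ∧ Z = ZofK K then 2 else 0

end

/-- The alternating sequence starting at r: even steps use matching g, odd steps use f. -/
def altseq {W : Type*} (f g : W → Option W) (r : W) : ℕ → W
  | 0 => r
  | n + 1 => (if Even n then g (altseq f g r n) else f (altseq f g r n)).getD (altseq f g r n)

lemma altseq_zero {W : Type*} (f g : W → Option W) (r : W) : altseq f g r 0 = r := rfl

lemma altseq_succ {W : Type*} (f g : W → Option W) (r : W) (n : ℕ) :
    altseq f g r (n + 1) =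
      (if Even n then g (altseq f g r n) else f (altseq f g r n)).getD (altseq f g r n) := rfl

lemma altseq_invariant {W : Type*} (H : SimpleGraph W)
    (f g : W → Option W) (r s : W) (hf : IsMatchingOn H f) (hg : IsMatchingOn H g)
    (hr : f r = none) (hfnear : ∀ w, w ≠ r → f w ≠ none)
    (hgs : g s = none) (hgnear : ∀ w, w ≠ s → g w ≠ none) :
    ∀ n : ℕ, (∀ i, i < n → altseq f g r i ≠ s) →
      (∀ i, i < n → if Even i then g (altseq f g r i) = some (altseq f g r (i+1))
          else f (altseq f g r i) = some (altseq f g r (i+1))) ∧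
      (∀ i j, i ≤ n → j ≤ n → altseq f g r i = altseq f g r j → i = j) := by
  set P := altseq f g r with hP
  intro n
  induction n with
  | zero =>
    intro _
    refine ⟨fun i hi => absurd hi (Nat.not_lt_zero i), fun i j hi hj _ => by omega⟩
  | succ n ih =>
    intro hgood
    obtain ⟨hstep, hinj⟩ := ih (fun i hi => hgood i (Nat.lt_succ_of_lt hi))
    -- step at n
    have stepn : if Even n then g (P n) = some (P (n+1)) else f (P n) = some (P (n+1)) := by
      by_cases hev : Even n
      · rw [if_pos hev]
        obtain ⟨w, hw⟩ := Option.ne_none_iff_exists'.mp (hgnear (P n) (hgood n (Nat.lt_succ_self n)))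
        rw [hP, altseq_succ, if_pos hev, ← hP, hw]
        simp [hw]
      · rw [if_neg hev]
        have hn0 : n ≠ 0 := by rintro rfl; exact hev (by norm_num)
        have hPnr : P n ≠ r := by
          intro h
          have : n = 0 := hinj n 0 (le_refl n) (Nat.zero_le n) (by rw [h, hP, altseq_zero])
          exact hn0 this
        obtain ⟨w, hw⟩ := Option.ne_none_iff_exists'.mp (hfnear (P n) hPnr)
        rw [hP, altseq_succ, if_neg hev, ← hP, hw]
        simp [hw]
    have hstep' : ∀ i, i < n + 1 →
        if Even i then g (P i) = some (P (i+1)) else f (P i) = some (P (i+1)) := by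
      intro i hi
      rcases Nat.lt_or_ge i n with h | h
      · exact hstep i h
      · have : i = n := by omega
        subst this; exact stepn
    refine ⟨hstep', ?_⟩
    -- injectivity up to n+1
    have claim : ∀ j, j ≤ n → P (n+1) = P j → False := by
      intro j hj heq
      -- j = n : self adjacency
      rcases Nat.eq_or_lt_of_le hj with heqj | hjn
      · rw [heqj] at heq
        by_cases hev : Even n
        · rw [if_pos hev] at stepn
          rw [heq] at stepn
          exact H.loopless.irrefl (P n) (hg.2 _ _ stepn)
        · rw [if_neg hev] at stepn
          rw [heq] at stepn
          exact H.loopless.irrefl (P n) (hf.2 _ _ stepn)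
      rcases j with _ | j'
      · -- j = 0 : P (n+1) = r
        rw [hP, altseq_zero, ← hP] at heq
        by_cases hev : Even n
        · rw [if_pos hev] at stepn
          rw [heq] at stepn
          have hgr : g r = some (P n) := hg.1 _ _ stepn
          rcases Nat.eq_zero_or_pos n with rfl | hn1
          · rw [hP, altseq_zero] at hgr
            exact H.loopless.irrefl r (hg.2 _ _ hgr)
          · have h0 := hstep 0 hn1
            rw [if_pos (by norm_num)] at h0
            rw [hP, altseq_zero, ← hP] at h0
            rw [h0] at hgr
            have : P n = P 1 := Option.some.inj hgr.symm
            have hn1' : n = 1 := hinj n 1 (le_refl n) hn1 this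
            subst hn1'
            exact (by norm_num : ¬ Even 1) hev
        · rw [if_neg hev] at stepn
          rw [heq] at stepn
          have := hf.1 _ _ stepn
          rw [hr] at this
          exact Option.some_ne_none _ this.symm
      · -- 1 ≤ j = j'+1 < n
        have hj'n : j' < n := by omega
        have enterj := hstep j' hj'n
        have hjn' : j' + 1 < n := by omega
        have leavej := hstep (j' + 1) hjn'
        by_cases hev : Even n <;> by_cases hev' : Even j'
        · -- both g into targets
          rw [if_pos hev] at stepn
          rw [if_pos hev'] at enterj
          rw [heq] at stepn
          have h1 : g (P (j'+1)) = some (P n) := hg.1 _ _ stepn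
          have h2 : g (P (j'+1)) = some (P j') := hg.1 _ _ enterj
          have : P n = P j' := Option.some.inj (h1.symm.trans h2)
          have : n = j' := hinj n j' (le_refl n) (by omega) this
          omega
        · -- n even, j' odd: leaving edge at j'+1 is g (since j'+1 even)
          rw [if_pos hev] at stepn
          rw [if_pos (Nat.even_add_one.mpr hev')] at leavej
          rw [heq] at stepn
          have h1 : g (P (j'+1)) = some (P n) := hg.1 _ _ stepn
          have : P (j'+1+1) = P n := Option.some.inj (leavej.symm.trans h1)
          have he : j' + 1 + 1 = n := hinj _ n (by omega) (le_refl n) this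
          -- then n and j'+1+1 have same parity, fine; but j'+1 even and n even
          -- n = j'+2, j' odd → n odd, contradiction
          have : ¬ Even n := by
            rw [← he]
            simpa [Nat.even_add_one, Nat.even_add] using hev'
          exact this hev
        · -- n odd, j' even: entering n+1 is f, leaving j'+1 is f (j'+1 odd)
          rw [if_neg hev] at stepn
          rw [if_neg (by simpa [Nat.even_add_one] using hev')] at leavej
          rw [heq] at stepn
          have h1 : f (P (j'+1)) = some (P n) := hf.1 _ _ stepn
          have : P (j'+1+1) = P n := Option.some.inj (leavej.symm.trans h1)
          have he : j' + 1 + 1 = n := hinj _ n (by omega) (le_refl n) this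
          have : Even n := by
            rw [← he]
            simpa [Nat.even_add_one, Nat.even_add] using hev'
          exact hev this
        · -- both odd entering type f
          rw [if_neg hev] at stepn
          rw [if_neg hev'] at enterj
          rw [heq] at stepn
          have h1 : f (P (j'+1)) = some (P n) := hf.1 _ _ stepn
          have h2 : f (P (j'+1)) = some (P j') := hf.1 _ _ enterj
          have : P n = P j' := Option.some.inj (h1.symm.trans h2)
          have : n = j' := hinj n j' (le_refl n) (by omega) this
          omega
    intro i j hi hj heq
    rcases Nat.lt_or_ge i (n+1) with hi' | hi' <;> rcases Nat.lt_or_ge j (n+1) with hj' | hj'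
    · exact hinj i j (by omega) (by omega) heq
    · have : j = n + 1 := by omega
      subst this
      exact (claim i (by omega) heq.symm).elim
    · have : i = n + 1 := by omega
      subst this
      exact (claim j (by omega) heq).elim
    · omega

/-- a factor-critical graph on at least 3 nodes with a near-perfect
matching f missing exactly the node r has an odd f-alternating cycle through r
whose two edges at r are non-matching. -/
theorem factor_critical_odd_alt_cycle {W : Type*} [Fintype W] [DecidableEq W]
    (H : SimpleGraph W) (hcard : 3 ≤ Fintype.card W)
    (hFC : ∀ v : W, ∃ g, IsMatchingOn H g ∧ g v = none ∧ ∀ w, w ≠ v → g w ≠ none)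
    (f : W → Option W) (r : W) (hf : IsMatchingOn H f)
    (hr : f r = none) (hnear : ∀ w, w ≠ r → f w ≠ none) :
    ∃ (c : ℕ → W) (k : ℕ), 1 ≤ k ∧ c 0 = r ∧ c (2 * k + 1) = c 0 ∧
      (∀ i j, i ≤ 2 * k → j ≤ 2 * k → c i = c j → i = j) ∧
      (∀ i, i < 2 * k + 1 → H.Adj (c i) (c (i + 1))) ∧
      (∀ i, i < k → f (c (2 * i + 1)) = some (c (2 * i + 2))) ∧
      (∀ i, i ≤ k → f (c (2 * i)) ≠ some (c (2 * i + 1))) := by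
  classical
  -- find a neighbor s of r
  obtain ⟨w, hwr⟩ := Fintype.exists_ne_of_one_lt_card (by omega) r
  obtain ⟨g', hg', hg'w, hg'near⟩ := hFC w
  have hgr' : g' r ≠ none := hg'near r (Ne.symm hwr)
  obtain ⟨s, hs⟩ := Option.ne_none_iff_exists'.mp hgr'
  have hadj : H.Adj r s := hg'.2 r s hs
  have hsr : s ≠ r := by
    intro h
    rw [h] at hadj
    exact H.loopless.irrefl r hadj
  obtain ⟨g, hg, hgs, hgnear⟩ := hFC s
  set P := altseq f g r with hP
  -- termination: the sequence reaches s
  have hterm : ∃ n, P n = s := by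
    by_contra hno
    push_neg at hno
    obtain ⟨_, hinj⟩ := altseq_invariant H f g r s hf hg hr hnear hgs hgnear
      (Fintype.card W) (fun i _ => hno i)
    have hinj' : Function.Injective (fun i : Fin (Fintype.card W + 1) => P i) := by
      intro a b hab
      exact Fin.ext (hinj a b (Nat.lt_succ_iff.mp a.isLt) (Nat.lt_succ_iff.mp b.isLt) hab)
    have := Fintype.card_le_of_injective _ hinj'
    simp at this
  set N := Nat.find hterm with hN
  have hNs : P N = s := Nat.find_spec hterm
  have hlt : ∀ i, i < N → P i ≠ s := fun i hi => Nat.find_min hterm hi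
  obtain ⟨hstep, hinj⟩ := altseq_invariant H f g r s hf hg hr hnear hgs hgnear N hlt
  rw [← hP] at hstep hinj
  have hN0 : N ≠ 0 := by
    intro h
    rw [h] at hNs
    exact hsr (by rw [← hNs, hP, altseq_zero])
  have hNeven : Even N := by
    by_contra hodd
    have hN1 : N - 1 < N := by omega
    have hmod : ¬ N % 2 = 0 := fun h => hodd (Nat.even_iff.mpr h)
    have := hstep (N - 1) hN1
    rw [if_pos (Nat.even_iff.mpr (by omega))] at this
    have hNe : N - 1 + 1 = N := by omega
    rw [hNe, hNs] at this
    have := hg.1 _ _ this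
    rw [hgs] at this
    exact Option.some_ne_none _ this.symm
  obtain ⟨m, hm⟩ := hNeven
  have hm1 : 1 ≤ m := by omega
  set c : ℕ → W := fun i => if i = 2 * m + 1 then r else P i with hc
  have hcP : ∀ i, i ≤ 2 * m → c i = P i := by
    intro i hi
    simp only [hc]
    rw [if_neg (by omega)]
  have hNm : N = 2 * m := by omega
  have hctop : c (2 * m + 1) = r := by simp [hc]
  have hc0 : c 0 = r := by rw [hcP 0 (by omega), hP, altseq_zero]
  refine ⟨c, m, hm1, ?_, ?_, ?_, ?_, ?_, ?_⟩
  · exact hc0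
  · rw [hctop, hc0]
  · intro i j hi hj heq
    rw [hcP i hi, hcP j hj] at heq
    exact hinj i j (by omega) (by omega) heq
  · intro i hi
    rcases Nat.lt_or_ge i (2 * m) with h | h
    · rw [hcP i (by omega), hcP (i+1) (by omega)]
      have := hstep i (by omega)
      by_cases hev : Even i
      · rw [if_pos hev] at this; exact hg.2 _ _ this
      · rw [if_neg hev] at this; exact hf.2 _ _ this
    · have : i = 2 * m := by omega
      subst this
      rw [hcP (2*m) (le_refl _), hctop, show (2:ℕ)*m = N by omega, hNs]
      exact hadj.symm
  · intro i hi
    rw [hcP (2*i+1) (by omega), hcP (2*i+2) (by omega)]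
    have := hstep (2*i+1) (by omega)
    rw [if_neg (by simp [Nat.even_add_one, parity_simps])] at this
    exact this
  · intro i hi
    rcases Nat.eq_zero_or_pos i with rfl | hi0
    · rw [hcP 0 (by omega)]
      simp only [hP, altseq_zero]
      rw [hr]
      simp
    rcases Nat.eq_or_lt_of_le hi with rfl | him
    · -- i = m : edge from s to r
      rw [hcP (2*i) (le_refl _), hctop, show (2:ℕ)*i = N by omega, hNs]
      intro h
      have := hf.1 _ _ h
      rw [hr] at this
      exact Option.some_ne_none _ this.symm
    · -- 0 < i < m
      rw [hcP (2*i) (by omega), hcP (2*i+1) (by omega)]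
      intro h
      obtain ⟨i', rfl⟩ : ∃ i', i = i' + 1 := ⟨i - 1, by omega⟩
      have henter := hstep (2*i'+1) (by omega)
      rw [if_neg (by simp [Nat.even_add_one, parity_simps])] at henter
      have h2 : f (P (2*i'+1+1)) = some (P (2*i'+1)) := hf.1 _ _ henter
      have h3 : (2:ℕ) * (i'+1) = 2*i'+1+1 := by omega
      rw [← h3] at h2
      have h4 : some (P (2*(i'+1)+1)) = some (P (2*i'+1)) := h.symm.trans h2
      have h5 : P (2*(i'+1)+1) = P (2*i'+1) := Option.some.inj h4
      have := hinj _ _ (by omega) (by omega) h5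
      omega
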